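/- arXiv:1412.3217 — 4 statements merged into one kernel-verified Lean document; each statement's English description precedes it below -/
import Mathlib

section
/- Every biholomorphic automorphism γ = (γ₀, γ₁, …, γₙ) of ℂ* × 𝔹ⁿ has the property that the components γ₁, …, γₙ do not depend on the first variable w₀ ∈ ℂ*; that is, for fixed w ∈ 𝔹ⁿ, the map w₀ ↦ γᵢ(w₀, w) is constant for each 1 ≤ i ≤ n. -/
/-! For fixed `w ∈ 𝔹ⁿ` the slice `z ↦ (γ (z, w)).2` is holomorphic on `ℂ*` with values in the
unit ball, so it extends across `0` by Riemann's removable singularity theorem and is then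
constant by Liouville's theorem. -/

open Filter Function Set Bornology Topology

/-- The product ℂ* × 𝔹ⁿ ⊂ ℂ × ℂⁿ. -/
def CstarBall (n : ℕ) : Set (ℂ × (Fin n → ℂ)) :=
  {p | p.1 ≠ 0 ∧ ∑ i : Fin n, ‖p.2 i‖ ^ 2 < 1}

theorem Complex.apply_eq_apply_of_differentiableOn_compl_singleton_of_isBounded
    {E : Type*} [NormedAddCommGroup E] [NormedSpace ℂ E] [CompleteSpace E]
    {f : ℂ → E} {c : ℂ} (hf : DifferentiableOn ℂ f {c}ᶜ) (hb : IsBounded (f '' {c}ᶜ))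
    {z w : ℂ} (hz : z ≠ c) (hw : w ≠ c) : f z = f w := by
  set g := update f c (limUnder (𝓝[≠] c) f)
  have hg_eq : EqOn g f {c}ᶜ := fun z hz => update_of_ne hz _ _
  have hg : Differentiable ℂ g := by
    rw [← differentiableOn_univ]
    refine differentiableOn_update_limUnder_of_bddAbove univ_mem ?_ ?_ <;>
      rw [← compl_eq_univ_sdiff]
    · exact hf
    · obtain ⟨C, hC⟩ := isBounded_iff_forall_norm_le.1 hb
      exact ⟨C, forall_mem_image.2 fun z hz => hC _ (mem_image_of_mem f hz)⟩
  have hg_range : range g ⊆ closure (f '' {c}ᶜ) := by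
    rw [← hg_eq.image_eq, ← image_univ, ← (dense_compl_singleton c).closure_eq]
    exact image_closure_subset_closure_image hg.continuous
  have := hg.apply_eq_apply_of_bounded (hb.closure.subset hg_range) z w
  rwa [hg_eq hz, hg_eq hw] at this

theorem norm_le_one_of_sum_norm_sq_le_one {ι : Type*} [Fintype ι] {E : ι → Type*}
    [∀ i, SeminormedAddCommGroup (E i)] {v : ∀ i, E i} (hv : ∑ i, ‖v i‖ ^ 2 ≤ 1) : ‖v‖ ≤ 1 := by
  refine (pi_norm_le_iff_of_nonneg zero_le_one).2 fun i => ?_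
  have : ‖v i‖ ^ 2 ≤ 1 :=
    (Finset.single_le_sum (fun j _ => sq_nonneg ‖v j‖) (Finset.mem_univ i)).trans hv
  exact (sq_le_one_iff₀ (norm_nonneg _)).1 this

theorem stmt_2_general (n : ℕ) (γ : ℂ × (Fin n → ℂ) → ℂ × (Fin n → ℂ))
    (hγ : DifferentiableOn ℂ γ (CstarBall n))
    (hγm : Set.MapsTo γ (CstarBall n) (CstarBall n)) :
    ∀ w : Fin n → ℂ, (∑ i : Fin n, ‖w i‖ ^ 2) < 1 →
      ∀ w₀ w₀' : ℂ, w₀ ≠ 0 → w₀' ≠ 0 → (γ (w₀, w)).2 = (γ (w₀', w)).2 := by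
  intro w hw w₀ w₀' h₀ h₀'
  have hslice : MapsTo (fun z : ℂ => (z, w)) {0}ᶜ (CstarBall n) := fun _ hz => ⟨hz, hw⟩
  refine Complex.apply_eq_apply_of_differentiableOn_compl_singleton_of_isBounded
    (f := fun z => (γ (z, w)).2) ?_ ?_ h₀ h₀'
  · exact (hγ.comp (differentiableOn_id.prodMk (differentiableOn_const w)) hslice).snd
  · refine (Metric.isBounded_closedBall (x := 0) (r := 1)).subset ?_
    rintro _ ⟨z, hz, rfl⟩
    rw [mem_closedBall_zero_iff]
    exact norm_le_one_of_sum_norm_sq_le_one (hγm (hslice hz)).2.le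

/-- For any biholomorphic automorphism γ of ℂ* × 𝔹ⁿ, the last n components of γ
do not depend on the first variable w₀ ∈ ℂ*. -/
theorem stmt_2 (n : ℕ) (γ δ : ℂ × (Fin n → ℂ) → ℂ × (Fin n → ℂ))
    (hγ : DifferentiableOn ℂ γ (CstarBall n)) (hδ : DifferentiableOn ℂ δ (CstarBall n))
    (hγm : Set.MapsTo γ (CstarBall n) (CstarBall n))
    (hδm : Set.MapsTo δ (CstarBall n) (CstarBall n))
    (hinv : Set.InvOn δ γ (CstarBall n) (CstarBall n)) :
    ∀ w : Fin n → ℂ, (∑ i : Fin n, ‖w i‖ ^ 2) < 1 →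
      ∀ w₀ w₀' : ℂ, w₀ ≠ 0 → w₀' ≠ 0 → (γ (w₀, w)).2 = (γ (w₀', w)).2 :=
  stmt_2_general n γ hγ hγm
end

section
/- Let p, q, k be nonnegative integers with p + q ≥ 2 and p + q > k. Then any Lie algebra homomorphism from su(p,q) to gl(k, ℂ) (over ℝ) is trivial. -/
open Matrix

/-- The Hermitian form matrix J = diag(-I_p, I_q). -/
def Jpq (p q : ℕ) : Matrix (Fin (p + q)) (Fin (p + q)) ℂ :=
  Matrix.diagonal fun i => if (i : ℕ) < p then -1 else 1

/-- The real Lie algebra su(p,q) = {X : XᴴJ + JX = 0, tr X = 0}. -/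
def su (p q : ℕ) : Set (Matrix (Fin (p + q)) (Fin (p + q)) ℂ) :=
  {X | Xᴴ * Jpq p q + Jpq p q * X = 0 ∧ X.trace = 0}

/-!
Restricted to `su(p,q)`, the map `φ` extends to a `ℂ`-linear Lie algebra homomorphism `ψ` on
`sl(p+q, ℂ) = su(p,q) ⊕ i • su(p,q)`; the splitting comes from the conjugation `X ↦ -J Xᴴ J`,
whose fixed points form `u(p,q)`. Now `sl(n, ℂ)` is simple: a nonzero ideal contains some
elementary matrix `E_ab`, and brackets with the `E_cd` then generate everything. The kernel of `ψ`
is an ideal, nonzero because `dim sl(p+q, ℂ) = (p+q)² - 1 > k² = dim gl(k, ℂ)`, so `ψ` vanishes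
and with it `φ` on `su(p,q)`.
-/

open LieAlgebra SpecialLinear Module

attribute [local instance] LieRing.ofAssociativeRing

theorem Matrix.IsDiag.exists_ne_of_trace_eq_zero {n K : Type*} [Fintype n] [DecidableEq n]
    [Field K] [CharZero K] {M : Matrix n n K} (hM : M.IsDiag) (htr : M.trace = 0) (h0 : M ≠ 0) :
    ∃ a b, M a a ≠ M b b := by
  by_contra! hconst
  obtain ⟨a, -⟩ : ∃ a b, M a b ≠ 0 := by
    by_contra! h
    exact h0 (Matrix.ext h)
  have hscalar : M = M a a • (1 : Matrix n n K) := by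
    ext i j
    obtain rfl | hij := eq_or_ne i j
    · simp [hconst i a]
    · simp [hM hij, hij]
  have hcard : (Fintype.card n : K) ≠ 0 :=
    Nat.cast_ne_zero.mpr (Fintype.card_pos_iff.mpr ⟨a⟩).ne'
  rw [hscalar, trace_smul, trace_one, smul_eq_mul, mul_eq_zero, or_iff_left hcard] at htr
  exact h0 (by rw [hscalar, htr, zero_smul])

namespace LieAlgebra.SpecialLinear

section CommRing

variable {n R : Type*} [Fintype n] [DecidableEq n] [CommRing R]

theorem lie_single_single {a b c : n} (hab : a ≠ b) (hbc : b ≠ c) (hac : a ≠ c) :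
    ⁅single a b hab (1 : R), single b c hbc (1 : R)⁆ = single a c hac 1 := by
  ext : 1
  simp [Ring.lie_def, single_mul_single_of_ne _ _ _ _ hac.symm]

theorem lie_single_single_swap {a b : n} (hab : a ≠ b) :
    ⁅single a b hab (1 : R), single b a hab.symm (1 : R)⁆ = singleSubSingle a b 1 := by
  ext : 1
  simp [Ring.lie_def]

theorem lie_singleSubSingle_single {a b : n} (hab : a ≠ b) :
    ⁅singleSubSingle a b (1 : R), single a b hab (1 : R)⁆ = (2 : R) • single a b hab 1 := by
  ext : 1
  simp [Ring.lie_def, sub_mul, mul_sub, single_mul_single_of_ne _ _ _ _ hab.symm, two_smul]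

theorem lie_lie_single_single (Z : sl n R) {a b : n} (hab : a ≠ b) :
    ⁅⁅Z, single a b hab (1 : R)⁆, single a b hab (1 : R)⁆
      = (-2 * (Z : Matrix n n R) b a) • single a b hab (1 : R) := by
  have hEE : Matrix.single a b (1 : R) * Matrix.single a b 1 = 0 :=
    single_mul_single_of_ne _ _ _ _ hab.symm _
  rw [← LinearMap.map_smul, smul_eq_mul, mul_one]
  ext : 1
  obtain ⟨M, -⟩ := Z
  simp only [LieSubalgebra.coe_bracket, val_single, Ring.lie_def, sub_mul, mul_sub, ← mul_assoc,
    hEE, zero_mul, single_mul_mul_single]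
  rw [mul_assoc, hEE, mul_zero, zero_sub, sub_zero, sub_eq_add_neg, single_neg, ← single_add]
  ring_nf

theorem lie_single_of_isDiag (Z : sl n R) (hZ : (Z : Matrix n n R).IsDiag) {a b : n}
    (hab : a ≠ b) :
    ⁅Z, single a b hab (1 : R)⁆
      = ((Z : Matrix n n R) a a - (Z : Matrix n n R) b b) • single a b hab (1 : R) := by
  ext : 1
  rw [LieSubalgebra.coe_bracket, ← hZ.diagonal_diag]
  ext i j
  simp only [val_single, Ring.lie_def, Matrix.sub_apply, diagonal_mul, diag_apply, single_apply,
    mul_ite, mul_one, mul_zero, mul_diagonal, ite_mul, one_mul, zero_mul, diagonal_apply_eq,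
    sub_smul, AddSubgroupClass.coe_sub, SetLike.val_smul, smul_single, smul_eq_mul]
  grind

theorem eq_sum_entry_smul (i : n) (X : sl n R) :
    X = ∑ a, ∑ b, (X : Matrix n n R) a b •
      if hab : a = b then singleSubSingle a i (1 : R) else single a b hab 1 := by
  have hval : ∀ a b, ((if hab : a = b then singleSubSingle a i (1 : R) else single a b hab 1 :
      sl n R) : Matrix n n R) = Matrix.single a b 1 - if a = b then Matrix.single i i 1 else 0 := by
    intro a b
    split_ifs with hab
    · subst hab; simp
    · simp
  ext : 1
  obtain ⟨M, hM⟩ := X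
  have htr : ∑ a, M a a = 0 := hM
  push_cast [hval]
  simp only [smul_sub, smul_ite, smul_zero, Finset.sum_sub_distrib, Finset.sum_ite_eq,
    Finset.mem_univ, if_true, ← Finset.sum_smul]
  simp only [htr, zero_smul, sub_zero, smul_single, smul_eq_mul, mul_one]
  exact matrix_eq_sum_single M

variable (I : LieIdeal R (sl n R))

theorem single_mem_of_mem_row {a b c : n} (hab : a ≠ b) (hac : a ≠ c)
    (h : single a b hab (1 : R) ∈ I) : single a c hac (1 : R) ∈ I := by
  obtain rfl | hbc := eq_or_ne b c
  · exact h
  · simpa only [lie_single_single hab hbc hac] using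
      lie_mem_left _ _ I _ (single b c hbc (1 : R)) h

theorem single_mem_of_mem_col {a b c : n} (hab : a ≠ b) (hcb : c ≠ b)
    (h : single a b hab (1 : R) ∈ I) : single c b hcb (1 : R) ∈ I := by
  obtain rfl | hca := eq_or_ne c a
  · exact h
  · simpa only [lie_single_single hca hab hcb] using
      lie_mem_right _ _ I (single c a hca (1 : R)) _ h

theorem mem_of_forall_single_mem (i : n) (h : ∀ a b (hab : a ≠ b), single a b hab (1 : R) ∈ I)
    (X : sl n R) : X ∈ I := by
  have hH : ∀ a, singleSubSingle a i (1 : R) ∈ I := fun a => by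
    obtain rfl | hai := eq_or_ne a i
    · convert I.zero_mem
      ext : 1
      simp
    · simpa only [lie_single_single_swap hai] using
        lie_mem_left _ _ I _ (single i a hai.symm (1 : R)) (h a i hai)
  rw [eq_sum_entry_smul i X]
  refine I.sum_mem fun a _ => I.sum_mem fun b _ => I.smul_mem _ ?_
  split_ifs with hab
  exacts [hH a, h a b hab]

end CommRing

section Field

variable {n K : Type*} [Fintype n] [DecidableEq n] [Field K]

theorem finrank_sl : finrank K (sl n K) = Fintype.card n ^ 2 - 1 := by
  rcases isEmpty_or_nonempty n with hn | ⟨⟨i⟩⟩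
  · simp [Module.finrank_zero_of_subsingleton]
  have hsurj : Function.Surjective (traceLinearMap n K K) := fun c =>
    ⟨Matrix.single i i c, by simp⟩
  have h := LinearMap.finrank_range_add_finrank_ker (traceLinearMap n K K)
  rw [LinearMap.range_eq_top.mpr hsurj, finrank_top, finrank_self, finrank_matrix,
    finrank_self] at h
  change finrank K (LinearMap.ker (traceLinearMap n K K)) = _
  rw [sq]
  omega

variable [CharZero K] (I : LieIdeal K (sl n K))

theorem single_mem_of_mem_swap {a b : n} (hab : a ≠ b) (h : single a b hab (1 : K) ∈ I) :
    single b a hab.symm (1 : K) ∈ I := by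
  have hH : singleSubSingle b a (1 : K) ∈ I := by
    simpa only [lie_single_single_swap hab.symm] using
      lie_mem_right _ _ I (single b a hab.symm (1 : K)) _ h
  have h2 : (2 : K) • single b a hab.symm (1 : K) ∈ I := by
    simpa only [lie_singleSubSingle_single hab.symm] using
      lie_mem_left _ _ I _ (single b a hab.symm (1 : K)) hH
  exact (Submodule.smul_mem_iff _ two_ne_zero).mp h2

theorem single_mem_of_single_mem {a b c d : n} (hab : a ≠ b) (hcd : c ≠ d)
    (h : single a b hab (1 : K) ∈ I) : single c d hcd (1 : K) ∈ I := by
  obtain rfl | hcb := eq_or_ne c b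
  · exact single_mem_of_mem_row I hab.symm hcd (single_mem_of_mem_swap I hab h)
  · exact single_mem_of_mem_row I hcb hcd (single_mem_of_mem_col I hab hcb h)

theorem exists_single_mem (hI : I ≠ ⊥) : ∃ a b, ∃ hab : a ≠ b, single a b hab (1 : K) ∈ I := by
  obtain ⟨Z, hZI, hZ0⟩ :=
    Submodule.exists_mem_ne_zero_of_ne_bot ((LieSubmodule.toSubmodule_eq_bot I).not.mpr hI)
  by_cases hdiag : (Z : Matrix n n K).IsDiag
  · obtain ⟨a, b, hab⟩ := hdiag.exists_ne_of_trace_eq_zero Z.2 (by simpa using hZ0)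
    have hab' : a ≠ b := fun h => hab (h ▸ rfl)
    have h : ((Z : Matrix n n K) a a - (Z : Matrix n n K) b b) • single a b hab' (1 : K) ∈ I := by
      simpa only [lie_single_of_isDiag Z hdiag hab'] using
        lie_mem_left _ _ I _ (single a b hab' (1 : K)) hZI
    exact ⟨a, b, hab', (Submodule.smul_mem_iff _ (sub_ne_zero.mpr hab)).mp h⟩
  · obtain ⟨b, a, hba, hZba⟩ : ∃ b a, b ≠ a ∧ (Z : Matrix n n K) b a ≠ 0 := by
      simpa [IsDiag, Pairwise] using hdiag
    have h : (-2 * (Z : Matrix n n K) b a) • single a b hba.symm (1 : K) ∈ I := by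
      simpa only [lie_lie_single_single Z hba.symm] using
        lie_mem_left _ _ I _ (single a b hba.symm (1 : K))
          (lie_mem_left _ _ I _ (single a b hba.symm (1 : K)) hZI)
    exact ⟨a, b, hba.symm,
      (Submodule.smul_mem_iff _ (mul_ne_zero (by norm_num) hZba)).mp h⟩

theorem isSimple_sl (hn : 1 < Fintype.card n) : IsSimple K (sl n K) where
  eq_bot_or_eq_top I := or_iff_not_imp_left.mpr fun hI => by
    obtain ⟨a, b, hab, h⟩ := exists_single_mem I hI
    exact eq_top_iff.mpr fun X _ =>
      mem_of_forall_single_mem I a (fun c d hcd => single_mem_of_single_mem I hab hcd h) X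
  non_abelian := sl_non_abelian n K hn

theorem lieHom_eq_zero_of_finrank_lt {L : Type*} [LieRing L] [LieAlgebra K L]
    [FiniteDimensional K L] (hn : 1 < Fintype.card n) (f : sl n K →ₗ⁅K⁆ L)
    (hf : finrank K L < finrank K (sl n K)) : f = 0 := by
  have hker : f.ker ≠ ⊥ := fun h =>
    hf.not_ge (LinearMap.finrank_le_finrank_of_injective (f := f.toLinearMap)
      (f.ker_eq_bot.mp h))
  have htop := ((isSimple_sl hn).eq_bot_or_eq_top f.ker).resolve_left hker
  ext x
  exact (LieHom.mem_ker).mp (htop ▸ LieSubmodule.mem_top x)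

end Field

end LieAlgebra.SpecialLinear

section ComplexPart

open Complex

variable {V W : Type*} [AddCommGroup V] [Module ℂ V] [AddCommGroup W] [Module ℂ W]

theorem Complex.I_smul_I_smul (v : V) : I • I • v = -v := by
  rw [smul_smul, I_mul_I, neg_one_smul]

def LinearMap.toComplexLinear (f : V →ₗ[ℝ] W) (hf : ∀ v, f (I • v) = I • f v) : V →ₗ[ℂ] W where
  toFun := f
  map_add' := f.map_add
  map_smul' c v := by
    rw [RingHom.id_apply, ← re_add_im c, add_smul, add_smul, mul_smul, mul_smul, Complex.coe_smul,
      Complex.coe_smul, Complex.coe_smul, Complex.coe_smul, map_add, map_smul, map_smul, hf]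

noncomputable def LinearMap.complexPart (g : V →ₗ[ℝ] W) : V →ₗ[ℂ] W :=
  LinearMap.toComplexLinear
    { toFun v := (2 : ℝ)⁻¹ • (g v - I • g (I • v))
      map_add' v w := by simp only [smul_add, map_add]; module
      map_smul' r v := by
        rw [smul_comm I r, map_smul, map_smul, smul_comm I r, RingHom.id_apply]; module }
    fun v => by
      simp only [LinearMap.coe_mk, AddHom.coe_mk, smul_comm I ((2 : ℝ)⁻¹), smul_sub, I_smul_I_smul,
        map_neg, smul_neg]
      abel

theorem LinearMap.complexPart_apply (g : V →ₗ[ℝ] W) (v : V) :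
    g.complexPart v = (2 : ℝ)⁻¹ • (g v - I • g (I • v)) := rfl

end ComplexPart

section RealForm

open Complex

variable {n : Type*} [Fintype n] [DecidableEq n] {J : Matrix n n ℂ}

def suForm (J : Matrix n n ℂ) : Set (Matrix n n ℂ) :=
  {X | Xᴴ * J + J * X = 0 ∧ X.trace = 0}

theorem lie_mem_suForm {X Y : Matrix n n ℂ} (hX : X ∈ suForm J) (hY : Y ∈ suForm J) :
    ⁅X, Y⁆ ∈ suForm J := by
  have hX' : Xᴴ * J = -(J * X) := eq_neg_of_add_eq_zero_left hX.1
  have hY' : Yᴴ * J = -(J * Y) := eq_neg_of_add_eq_zero_left hY.1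
  refine ⟨?_, LieAlgebra.matrix_trace_commutator_zero _ _ _ _⟩
  simp only [Ring.lie_def, conjTranspose_sub, conjTranspose_mul, sub_mul, mul_sub, mul_assoc, hX',
    hY']
  simp only [← mul_assoc, hX', hY', mul_neg, neg_mul]
  abel

def suConj (J : Matrix n n ℂ) : Matrix n n ℂ →ₗ[ℝ] Matrix n n ℂ where
  toFun X := -(J * Xᴴ * J)
  map_add' X Y := by simp only [conjTranspose_add, mul_add, add_mul, neg_add]
  map_smul' r X := by simp [conjTranspose_smul]

theorem suConj_apply (X : Matrix n n ℂ) : suConj J X = -(J * Xᴴ * J) := rfl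

theorem suConj_suConj (hJ : J * J = 1) (hJh : Jᴴ = J) (X : Matrix n n ℂ) :
    suConj J (suConj J X) = X := by
  simp only [suConj_apply, conjTranspose_neg, conjTranspose_mul, hJh, conjTranspose_conjTranspose,
    mul_neg, neg_mul, neg_neg, ← mul_assoc, hJ, one_mul]
  rw [mul_assoc, hJ, mul_one]

theorem suConj_I_smul (X : Matrix n n ℂ) : suConj J (I • X) = -(I • suConj J X) := by
  simp [suConj_apply, conjTranspose_smul]

theorem trace_suConj (hJ : J * J = 1) (X : Matrix n n ℂ) :
    (suConj J X).trace = -star X.trace := by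
  rw [suConj_apply, trace_neg, trace_mul_cycle, hJ, one_mul, trace_conjTranspose]

theorem suConj_eq_self_iff (hJ : J * J = 1) {X : Matrix n n ℂ} :
    suConj J X = X ↔ Xᴴ * J + J * X = 0 := by
  rw [suConj_apply, neg_eq_iff_eq_neg, ← add_eq_zero_iff_eq_neg]
  constructor <;> intro h <;> simpa [mul_add, ← mul_assoc, hJ] using congrArg (J * ·) h

theorem exists_eq_add_I_smul (hJ : J * J = 1) (hJh : Jᴴ = J) {X : Matrix n n ℂ}
    (hX : X.trace = 0) : ∃ A ∈ suForm J, ∃ B ∈ suForm J, X = A + I • B := by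
  refine ⟨(2 : ℝ)⁻¹ • (X + suConj J X), ⟨?_, ?_⟩, (2 : ℝ)⁻¹ • (I • (suConj J X - X)), ⟨?_, ?_⟩, ?_⟩
  · rw [← suConj_eq_self_iff hJ, map_smul, map_add, suConj_suConj hJ hJh, add_comm]
  · simp [trace_suConj hJ, hX]
  · rw [← suConj_eq_self_iff hJ, map_smul, suConj_I_smul, map_sub, suConj_suConj hJ hJh]
    module
  · simp [trace_suConj hJ, hX]
  · rw [smul_comm I, smul_smul I I, I_mul_I]
    module

theorem LinearMap.map_lie_add_I_smul {L L' : Type*} [LieRing L] [LieAlgebra ℂ L] [LieRing L']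
    [LieAlgebra ℂ L'] (ψ : L →ₗ[ℂ] L') {S : Set L} (hS : ∀ a ∈ S, ∀ b ∈ S, ψ ⁅a, b⁆ = ⁅ψ a, ψ b⁆)
    {a b c d : L} (ha : a ∈ S) (hb : b ∈ S) (hc : c ∈ S) (hd : d ∈ S) :
    ψ ⁅a + I • b, c + I • d⁆ = ⁅ψ (a + I • b), ψ (c + I • d)⁆ := by
  simp only [add_lie, lie_add, smul_lie, lie_smul, map_add, map_smul, hS _ ha _ hc, hS _ ha _ hd,
    hS _ hb _ hc, hS _ hb _ hd]

variable {A : Type*} [Ring A] [Algebra ℂ A]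

-- On `suForm J` the map `φ ∘ (1 + suConj J)` is `2 • φ`, which `complexPart` halves again.
noncomputable def suExtend (J : Matrix n n ℂ) (φ : Matrix n n ℂ →ₗ[ℝ] A) :
    Matrix n n ℂ →ₗ[ℂ] A :=
  (φ ∘ₗ (LinearMap.id + suConj J)).complexPart

theorem suExtend_apply_of_mem (hJ : J * J = 1) (φ : Matrix n n ℂ →ₗ[ℝ] A) {X : Matrix n n ℂ}
    (hX : X ∈ suForm J) : suExtend J φ X = φ X := by
  have hσ : suConj J X = X := (suConj_eq_self_iff hJ).mpr hX.1
  rw [suExtend, LinearMap.complexPart_apply]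
  simp only [LinearMap.comp_apply, LinearMap.add_apply, LinearMap.id_apply, suConj_I_smul, hσ,
    add_neg_cancel, map_zero, smul_zero, sub_zero, ← two_smul ℝ X, map_smul, smul_smul]
  norm_num

theorem suExtend_lie (hJ : J * J = 1) (hJh : Jᴴ = J) (φ : Matrix n n ℂ →ₗ[ℝ] A)
    (hφ : ∀ X ∈ suForm J, ∀ Y ∈ suForm J, φ ⁅X, Y⁆ = ⁅φ X, φ Y⁆) {X Y : Matrix n n ℂ}
    (hX : X.trace = 0) (hY : Y.trace = 0) :
    suExtend J φ ⁅X, Y⁆ = ⁅suExtend J φ X, suExtend J φ Y⁆ := by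
  obtain ⟨X₁, hX₁, X₂, hX₂, rfl⟩ := exists_eq_add_I_smul hJ hJh hX
  obtain ⟨Y₁, hY₁, Y₂, hY₂, rfl⟩ := exists_eq_add_I_smul hJ hJh hY
  refine (suExtend J φ).map_lie_add_I_smul (fun a ha b hb => ?_) hX₁ hX₂ hY₁ hY₂
  rw [suExtend_apply_of_mem hJ φ (lie_mem_suForm ha hb), suExtend_apply_of_mem hJ φ ha,
    suExtend_apply_of_mem hJ φ hb, hφ a ha b hb]

noncomputable def suExtendLieHom (hJ : J * J = 1) (hJh : Jᴴ = J) (φ : Matrix n n ℂ →ₗ[ℝ] A)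
    (hφ : ∀ X ∈ suForm J, ∀ Y ∈ suForm J, φ ⁅X, Y⁆ = ⁅φ X, φ Y⁆) : sl n ℂ →ₗ⁅ℂ⁆ A :=
  { suExtend J φ ∘ₗ (sl n ℂ).toSubmodule.subtype with
    map_lie' := fun {X Y} => suExtend_lie hJ hJh φ hφ X.2 Y.2 }

theorem suExtendLieHom_apply_of_mem (hJ : J * J = 1) (hJh : Jᴴ = J) (φ : Matrix n n ℂ →ₗ[ℝ] A)
    (hφ : ∀ X ∈ suForm J, ∀ Y ∈ suForm J, φ ⁅X, Y⁆ = ⁅φ X, φ Y⁆) {X : Matrix n n ℂ}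
    (hX : X ∈ suForm J) : suExtendLieHom hJ hJh φ hφ ⟨X, hX.2⟩ = φ X :=
  suExtend_apply_of_mem hJ φ hX

end RealForm

theorem Jpq_mul_self (p q : ℕ) : Jpq p q * Jpq p q = 1 := by
  rw [Jpq, diagonal_mul_diagonal, ← diagonal_one]
  congr 1
  ext i
  split_ifs <;> norm_num

theorem conjTranspose_Jpq (p q : ℕ) : (Jpq p q)ᴴ = Jpq p q := by
  rw [Jpq, diagonal_conjTranspose]
  congr 1
  ext i
  simp only [Pi.star_apply]
  split_ifs <;> simp

/-- If p + q ≥ 2 and p + q > k, then any real Lie algebra homomorphism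
su(p,q) → gl(k,ℂ) is trivial. -/
theorem stmt_4 (p q k : ℕ) (hpq : 2 ≤ p + q) (hk : k < p + q)
    (φ : Matrix (Fin (p + q)) (Fin (p + q)) ℂ →ₗ[ℝ] Matrix (Fin k) (Fin k) ℂ)
    (hφ : ∀ X ∈ su p q, ∀ Y ∈ su p q,
      φ (X * Y - Y * X) = φ X * φ Y - φ Y * φ X) :
    ∀ X ∈ su p q, φ X = 0 := by
  intro X hX
  have hJ := Jpq_mul_self p q
  have hJh := conjTranspose_Jpq p q
  have hdim : finrank ℂ (Matrix (Fin k) (Fin k) ℂ) < finrank ℂ (sl (Fin (p + q)) ℂ) := by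
    rw [finrank_sl, finrank_matrix, finrank_self, Fintype.card_fin, Fintype.card_fin]
    have : k * k + 2 ≤ (p + q) ^ 2 := by nlinarith
    omega
  have hzero : suExtendLieHom hJ hJh φ hφ = 0 :=
    lieHom_eq_zero_of_finrank_lt (by rw [Fintype.card_fin]; omega) _ hdim
  rw [← suExtendLieHom_apply_of_mem hJ hJh φ hφ hX, hzero, LieHom.zero_apply]
end

section
/- For n > 1, every biholomorphic automorphism f of D^{n,1} = {z ∈ ℂ^{n+1} : -|z₀|² + |z₁|² + ⋯ + |zₙ|² > 0} extends to a biholomorphic automorphism of ℂ^{n+1}. -/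
/-- The domain D^{n,1} = {z ∈ ℂ^{n+1} : -|z₀|² + |z₁|² + ⋯ + |zₙ|² > 0}. -/
def Dn1 (n : ℕ) : Set (Fin (n + 1) → ℂ) :=
  {z | ‖z 0‖ ^ 2 < ∑ i : Fin n, ‖z i.succ‖ ^ 2}

/-!
Hartogs' extension along the coordinate `z₁`. A point `(z₀, …, zₙ)` whose coordinate `z₁` is
replaced by any `w` with `|w| > |z₀|` still lies in `D^{n,1}`, so the Cauchy integral of
`w ↦ f (z₀, w, z₂, …)` over a circle `|w| = R` with `R > ‖z‖` makes sense for every `z`. It is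
independent of `R` by Cauchy's theorem on annuli, holomorphic in `z` by differentiation under
the integral sign, and equal to `f z` by Cauchy's formula when the whole slice lies in `D^{n,1}`,
which happens on the nonempty open set `|z₀| < |z₂|`. By the identity theorem on the connected
domain `D^{n,1}` the extension `F` of `f` agrees with `f`, and for the extension `G` of the
inverse, `G ∘ F = id` on `D^{n,1}`, hence on all of `ℂ^{n+1}`.
-/

open Metric Set Filter Topology MeasureTheory Function Complex Real

-- The derivative is recovered as a limit of difference quotients along coordinate vectors.
theorem aestronglyMeasurable_of_hasFDerivAt {𝕜 ι V α : Type*} [NontriviallyNormedField 𝕜]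
    [Fintype ι] [NormedAddCommGroup V] [NormedSpace 𝕜 V] [MeasurableSpace α] {μ : Measure α}
    {F : (ι → 𝕜) → α → V} {F' : α → (ι → 𝕜) →L[𝕜] V} {x₀ : ι → 𝕜}
    (hF : ∀ᶠ x in 𝓝 x₀, AEStronglyMeasurable (F x) μ)
    (hF' : ∀ᵐ a ∂μ, HasFDerivAt (F · a) (F' a) x₀) : AEStronglyMeasurable F' μ := by
  classical
  obtain ⟨k, hk⟩ := NormedField.exists_one_lt_norm 𝕜
  have hk_pow : Tendsto (fun n : ℕ => ‖k ^ n‖) atTop atTop := by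
    simpa only [norm_pow] using tendsto_pow_atTop_atTop_of_one_lt hk
  have hcol : ∀ v, AEStronglyMeasurable (fun a => F' a v) μ := by
    intro v
    have hpts : Tendsto (fun n : ℕ => x₀ + (k ^ n)⁻¹ • v) atTop (𝓝 x₀) := by
      have : Tendsto (fun n : ℕ => (k ^ n)⁻¹) atTop (𝓝 0) := by
        rw [tendsto_zero_iff_norm_tendsto_zero]
        exact (tendsto_inv_atTop_zero.comp hk_pow).congr fun n => (norm_inv _).symm
      simpa using (this.smul_const v).const_add x₀
    obtain ⟨N, hN⟩ := eventually_atTop.1 (hpts.eventually hF)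
    refine aestronglyMeasurable_of_tendsto_ae atTop
      (f := fun n a => k ^ (n + N) • (F (x₀ + (k ^ (n + N))⁻¹ • v) a - F x₀ a))
      (fun n => ((hN (n + N) le_add_self).sub hF.self_of_nhds).const_smul _) ?_
    filter_upwards [hF'] with a ha
    exact ha.lim v (hk_pow.comp (tendsto_add_atTop_nat N))
  have hsum : F' = fun a => ∑ i, (ContinuousLinearMap.proj i).smulRight (F' a (Pi.single i 1)) := by
    ext a v : 2
    conv_lhs => rw [pi_eq_sum_univ' v]
    simp
  rw [hsum]
  exact Finset.aestronglyMeasurable_fun_sum _ fun i _ =>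
    (ContinuousLinearMap.smulRightL 𝕜 (ι → 𝕜) V (ContinuousLinearMap.proj i)).continuous
      |>.comp_aestronglyMeasurable (hcol _)

theorem DifferentiableOn.lipschitzOnWith_ball_of_norm_le {E F : Type*} [NormedAddCommGroup E]
    [NormedSpace ℂ E] [NormedAddCommGroup F] [NormedSpace ℂ F] {f : E → F} {c : E} {r M : ℝ}
    (hr : 0 < r) (hd : DifferentiableOn ℂ f (ball c (2 * r)))
    (hM : ∀ z ∈ ball c (2 * r), ‖f z‖ ≤ M) :
    LipschitzOnWith (Real.toNNReal (2 * M / r)) f (ball c r) := by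
  have hsub : ∀ q ∈ ball c r, ball q r ⊆ ball c (2 * r) := fun q hq =>
    ball_subset_ball' (by rw [mem_ball] at hq; linarith)
  refine (convex_ball c r).lipschitzOnWith_of_nnnorm_fderiv_le
    (fun q hq => hd.differentiableAt (isOpen_ball.mem_nhds (hsub q hq (mem_ball_self hr))))
    fun q hq => ?_
  have hmaps : MapsTo f (ball q r) (closedBall (f q) (2 * M)) := fun z hz => by
    rw [mem_closedBall, dist_eq_norm]
    linarith [norm_sub_le (f z) (f q), hM z (hsub q hq hz), hM q (hsub q hq (mem_ball_self hr))]
  rw [← NNReal.coe_le_coe, coe_nnnorm]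
  exact (Complex.norm_fderiv_le_div_of_mapsTo_ball (hd.mono (hsub q hq)) hmaps hr).trans
    (Real.le_coe_toNNReal _)

-- The Schwarz lemma turns the bound into a uniform Lipschitz bound, as needed to
-- differentiate under the integral sign.
theorem differentiableAt_integral_of_differentiableOn_ball {ι V α : Type*} [Fintype ι]
    [NormedAddCommGroup V] [NormedSpace ℂ V] [MeasurableSpace α] {μ : Measure α} [IsFiniteMeasure μ]
    {F : (ι → ℂ) → α → V} {x₀ : ι → ℂ} {r M : ℝ} (hr : 0 < r)
    (hF_meas : ∀ x ∈ ball x₀ r, AEStronglyMeasurable (F x) μ)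
    (hd : ∀ a, DifferentiableOn ℂ (F · a) (ball x₀ (2 * r)))
    (hM : ∀ a, ∀ x ∈ ball x₀ (2 * r), ‖F x a‖ ≤ M) :
    DifferentiableAt ℂ (fun x => ∫ a, F x a ∂μ) x₀ := by
  have hmeas : ∀ᶠ x in 𝓝 x₀, AEStronglyMeasurable (F x) μ :=
    eventually_of_mem (ball_mem_nhds x₀ hr) hF_meas
  have hderiv : ∀ a, HasFDerivAt (F · a) (fderiv ℂ (F · a) x₀) x₀ := fun a =>
    ((hd a).differentiableAt (ball_mem_nhds x₀ (by positivity))).hasFDerivAt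
  have hlip : ∀ a, LipschitzOnWith (Real.nnabs (2 * M / r)) (F · a) (ball x₀ r) := fun a =>
    ((hd a).lipschitzOnWith_ball_of_norm_le hr (hM a)).weaken (by
      rw [← NNReal.coe_le_coe, Real.coe_nnabs, Real.coe_toNNReal']
      exact max_le (le_abs_self _) (abs_nonneg _))
  exact (hasFDerivAt_integral_of_dominated_loc_of_lip (ball_mem_nhds x₀ hr) hmeas
    (.of_bound hmeas.self_of_nhds M (ae_of_all _ fun a => hM a x₀ (mem_ball_self (by positivity))))
    (aestronglyMeasurable_of_hasFDerivAt hmeas (ae_of_all _ hderiv)) (ae_of_all _ hlip)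
    (integrable_const _) (ae_of_all _ hderiv)).2.differentiableAt

section IdentityTheorem

variable {E F : Type*} [NormedAddCommGroup E] [NormedSpace ℂ E] [NormedAddCommGroup F]
  [NormedSpace ℂ F] [CompleteSpace F] {f g : E → F} {U : Set E}

theorem DifferentiableOn.eqOn_of_convex_of_eventuallyEq (hf : DifferentiableOn ℂ f U)
    (hg : DifferentiableOn ℂ g U) (hU : IsOpen U) (hc : Convex ℝ U) {x : E} (hx : x ∈ U)
    (hfg : f =ᶠ[𝓝 x] g) : EqOn f g U := by
  intro z hz
  set γ : ℂ → E := fun t => x + t • (z - x)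
  have hγ : Differentiable ℂ γ := by fun_prop
  have hΩ : Convex ℝ (γ ⁻¹' U) := by
    intro t₁ h₁ t₂ h₂ a b ha hb hab
    have : γ (a • t₁ + b • t₂) = a • γ t₁ + b • γ t₂ := by
      simp only [γ, smul_add, add_smul, smul_assoc]
      linear_combination (norm := module) -(hab • x)
    rw [mem_preimage, this]
    exact hc h₁ h₂ ha hb hab
  have hΩo : IsOpen (γ ⁻¹' U) := hU.preimage hγ.continuous
  have ha : ∀ h : E → F, DifferentiableOn ℂ h U → AnalyticOnNhd ℂ (h ∘ γ) (γ ⁻¹' U) :=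
    fun h hh => (hh.comp hγ.differentiableOn (mapsTo_preimage γ U)).analyticOnNhd hΩo
  have hev : f ∘ γ =ᶠ[𝓝 0] g ∘ γ :=
    hfg.comp_tendsto (by simpa [γ] using hγ.continuous.tendsto 0)
  simpa [γ] using (ha f hf).eqOn_of_preconnected_of_eventuallyEq (ha g hg) hΩ.isPreconnected
    (by simpa [γ] using hx) hev (show (1 : ℂ) ∈ γ ⁻¹' U by simpa [γ] using hz)

theorem DifferentiableOn.eqOn_of_preconnected_of_eventuallyEq (hf : DifferentiableOn ℂ f U)
    (hg : DifferentiableOn ℂ g U) (hU : IsOpen U) (hc : IsPreconnected U) {x : E} (hx : x ∈ U)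
    (hfg : f =ᶠ[𝓝 x] g) : EqOn f g U := by
  have hsub : U ⊆ {y | f =ᶠ[𝓝 y] g} := by
    refine hc.subset_of_closure_inter_subset isOpen_setOfPred_eventually_nhds ⟨x, hx, hfg⟩ ?_
    rintro y ⟨hy, hyU⟩
    obtain ⟨ε, hε, hεU⟩ := Metric.isOpen_iff.1 hU y hyU
    obtain ⟨y', hy', hyy'⟩ := Metric.mem_closure_iff.1 hy ε hε
    exact eventually_of_mem (ball_mem_nhds y hε) <| (hf.mono hεU).eqOn_of_convex_of_eventuallyEq
      (hg.mono hεU) isOpen_ball (convex_ball y ε) (mem_ball'.2 hyy') hy'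
  exact fun y hy => (hsub hy).eq_of_nhds

end IdentityTheorem

theorem comp_eq_id_of_eqOn_of_leftInvOn {E : Type*} [NormedAddCommGroup E] [NormedSpace ℂ E]
    [CompleteSpace E] {F G f g : E → E} {D : Set E} (hD : IsOpen D)
    (hne : D.Nonempty) (hF : Differentiable ℂ F) (hG : Differentiable ℂ G) (hFf : EqOn F f D)
    (hGg : EqOn G g D) (hf : MapsTo f D D) (hinv : LeftInvOn g f D) : G ∘ F = id := by
  obtain ⟨x, hx⟩ := hne
  have hev : G ∘ F =ᶠ[𝓝 x] id := eventually_of_mem (hD.mem_nhds hx) fun y hy => by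
    simp [hFf hy, hGg (hf hy), hinv hy]
  exact funext fun y => (hG.comp hF).differentiableOn.eqOn_of_preconnected_of_eventuallyEq
    differentiable_id.differentiableOn isOpen_univ isPreconnected_univ (mem_univ x) hev (mem_univ y)

section SliceCauchyIntegral

variable {ι V : Type*} [Fintype ι] [DecidableEq ι] [NormedAddCommGroup V]
  {f : (ι → ℂ) → V} {U : Set (ι → ℂ)} {j : ι}

theorem differentiable_update_left {𝕜 : Type*} [NontriviallyNormedField 𝕜] (j : ι) (w : 𝕜) :
    Differentiable 𝕜 fun z : ι → 𝕜 => update z j w := by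
  refine differentiable_pi.2 fun i => ?_
  rcases eq_or_ne i j with rfl | hij
  · simp
  · simpa [update_of_ne hij] using differentiable_apply i

theorem dist_update_update_le {β : Type*} [PseudoMetricSpace β] (z z' : ι → β) (j : ι) (w : β) :
    dist (update z j w) (update z' j w) ≤ dist z z' := by
  refine dist_pi_le_iff dist_nonneg |>.2 fun i => ?_
  rcases eq_or_ne i j with rfl | hij
  · simp
  · simpa [update_of_ne hij] using dist_le_pi_dist z z' i

theorem exists_ball_update_sphere_mem (hf : ContinuousOn f U) (hU : IsOpen U) {R : ℝ}
    {z₀ : ι → ℂ} (hz₀ : ‖z₀ j‖ < R) (hz₀U : ∀ w ∈ sphere (0 : ℂ) R, update z₀ j w ∈ U) :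
    ∃ r > 0, ∃ M, ∀ z ∈ ball z₀ r, ∀ w ∈ sphere (0 : ℂ) R,
      update z j w ∈ U ∧ ‖f (update z j w)‖ ≤ M ∧ r ≤ ‖w - z j‖ := by
  set K := (fun w => update z₀ j w) '' sphere (0 : ℂ) R
  have hK : IsCompact K := (isCompact_sphere 0 R).image (continuous_const.update j continuous_id)
  obtain ⟨δ, hδ, hδU⟩ := hK.exists_cthickening_subset_open hU (image_subset_iff.2 hz₀U)
  obtain ⟨M, hM⟩ := hK.cthickening.exists_bound_of_continuousOn (hf.mono hδU)
  obtain ⟨r, hr, hrδ, hrR⟩ : ∃ r > 0, r ≤ δ ∧ 2 * r ≤ R - ‖z₀ j‖ :=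
    ⟨min δ (R - ‖z₀ j‖) / 2, by have := sub_pos.2 hz₀; positivity,
      by linarith [min_le_left δ (R - ‖z₀ j‖)], by linarith [min_le_right δ (R - ‖z₀ j‖)]⟩
  refine ⟨r, hr, M, fun z hz w hw => ?_⟩
  rw [mem_ball] at hz
  have hzK : update z j w ∈ cthickening δ K :=
    mem_cthickening_of_dist_le _ (update z₀ j w) _ _ ⟨w, hw, rfl⟩
      ((dist_update_update_le z z₀ j w).trans (by linarith))
  have hzj : ‖z j - z₀ j‖ ≤ dist z z₀ := by simpa [dist_eq_norm] using dist_le_pi_dist z z₀ j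
  refine ⟨hδU hzK, hM _ hzK, ?_⟩
  linarith [norm_sub_norm_le w (z j), norm_sub_norm_le (z j) (z₀ j), mem_sphere_zero_iff_norm.1 hw]

variable [NormedSpace ℂ V]

theorem DifferentiableOn.differentiableAt_comp_update (hf : DifferentiableOn ℂ f U)
    (hU : IsOpen U) {z : ι → ℂ} {w : ℂ} (hw : update z j w ∈ U) :
    DifferentiableAt ℂ (fun w => f (update z j w)) w :=
  (hf.differentiableAt (hU.mem_nhds hw)).comp w (hasFDerivAt_update z w).differentiableAt

noncomputable def sliceCauchyIntegral (f : (ι → ℂ) → V) (j : ι) (R : ℝ) (z : ι → ℂ) : V :=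
  (2 * π * I : ℂ)⁻¹ • ∮ w in C(0, R), (w - z j)⁻¹ • f (update z j w)

theorem sliceCauchyIntegral_eq_self [CompleteSpace V] (hf : DifferentiableOn ℂ f U)
    (hU : IsOpen U) {R : ℝ} {z : ι → ℂ} (hz : ‖z j‖ < R)
    (hzU : ∀ w ∈ closedBall (0 : ℂ) R, update z j w ∈ U) :
    sliceCauchyIntegral f j R z = f z := by
  have hd : ∀ w ∈ closedBall (0 : ℂ) R, DifferentiableAt ℂ (fun w => f (update z j w)) w :=
    fun w hw => hf.differentiableAt_comp_update hU (hzU w hw)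
  unfold sliceCauchyIntegral
  simpa only [update_eq_self] using
    two_pi_I_inv_smul_circleIntegral_sub_inv_smul_of_differentiable_on_off_countable
      countable_empty (mem_ball_zero_iff.2 hz)
      (fun w hw => (hd w hw).continuousAt.continuousWithinAt)
      fun w hw => hd w (ball_subset_closedBall hw.1)

theorem sliceCauchyIntegral_eq_of_le (hf : DifferentiableOn ℂ f U) (hU : IsOpen U)
    {R R' : ℝ} {z : ι → ℂ} (hz : ‖z j‖ < R) (hRR' : R ≤ R')
    (hzU : ∀ w : ℂ, R ≤ ‖w‖ → ‖w‖ ≤ R' → update z j w ∈ U) :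
    sliceCauchyIntegral f j R' z = sliceCauchyIntegral f j R z := by
  have hd : ∀ w ∈ closedBall (0 : ℂ) R' \ ball 0 R,
      DifferentiableAt ℂ (fun w => (w - z j)⁻¹ • f (update z j w)) w := by
    rintro w ⟨hwR', hwR⟩
    rw [mem_closedBall_zero_iff] at hwR'
    rw [mem_ball_zero_iff, not_lt] at hwR
    have hne : w - z j ≠ 0 := sub_ne_zero.2 fun h => by rw [h] at hwR; linarith
    have hinv : DifferentiableAt ℂ (fun w : ℂ => (w - z j)⁻¹) w :=
      (differentiableAt_id.sub_const _).inv hne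
    exact hinv.smul (hf.differentiableAt_comp_update hU (hzU w hwR hwR'))
  unfold sliceCauchyIntegral
  rw [circleIntegral_eq_of_differentiable_on_annulus_off_countable
    ((norm_nonneg _).trans_lt hz) hRR' countable_empty
    (fun w hw => (hd w hw).continuousAt.continuousWithinAt)
    fun w hw => hd w ⟨ball_subset_closedBall hw.1.1, fun h => hw.1.2 (ball_subset_closedBall h)⟩]

theorem differentiableAt_sliceCauchyIntegral (hf : DifferentiableOn ℂ f U) (hU : IsOpen U)
    {R : ℝ} {z₀ : ι → ℂ} (hz₀ : ‖z₀ j‖ < R)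
    (hz₀U : ∀ w ∈ sphere (0 : ℂ) R, update z₀ j w ∈ U) :
    DifferentiableAt ℂ (sliceCauchyIntegral f j R) z₀ := by
  have hR : 0 ≤ R := (norm_nonneg _).trans hz₀.le
  obtain ⟨r, hr, M, hnear⟩ := exists_ball_update_sphere_mem hf.continuousOn hU hz₀ hz₀U
  have hne : ∀ z ∈ ball z₀ r, ∀ θ, circleMap 0 R θ - z j ≠ 0 := fun z hz θ h => by
    have := (hnear z hz _ (circleMap_mem_sphere 0 hR θ)).2.2
    rw [h, norm_zero] at this
    linarith
  set G : (ι → ℂ) → ℝ → V := fun z θ =>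
    (circleMap 0 R θ * I) • ((circleMap 0 R θ - z j)⁻¹ • f (update z j (circleMap 0 R θ)))
  have hG : sliceCauchyIntegral f j R =
      fun z => (2 * π * I : ℂ)⁻¹ • ∫ θ in Ioc 0 (2 * π), G z θ := by
    ext z
    simp only [sliceCauchyIntegral, circleIntegral, deriv_circleMap,
      intervalIntegral.integral_of_le two_pi_pos.le, G]
  have hr2 : 2 * (r / 2) = r := by ring
  rw [hG]
  refine DifferentiableAt.const_smul (differentiableAt_integral_of_differentiableOn_ball
    (M := R * (r⁻¹ * M)) (half_pos hr) (fun z hz => ?_) (fun θ z hz => ?_) fun θ z hz => ?_) _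
  · have hz : z ∈ ball z₀ r := ball_subset_ball (by linarith) hz
    refine Continuous.aestronglyMeasurable ?_
    exact ((continuous_circleMap 0 R).mul continuous_const).smul
      ((((continuous_circleMap 0 R).sub continuous_const).inv₀ (hne z hz)).smul
        (hf.continuousOn.comp_continuous (continuous_const.update j (continuous_circleMap 0 R))
          fun θ => (hnear z hz _ (circleMap_mem_sphere 0 hR θ)).1))
  · rw [hr2] at hz
    have hinv : DifferentiableAt ℂ (fun z : ι → ℂ => (circleMap 0 R θ - z j)⁻¹) z :=
      ((differentiable_apply j z).const_sub _).inv (hne z hz θ)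
    have hfz := hf.differentiableAt (hU.mem_nhds (hnear z hz _ (circleMap_mem_sphere 0 hR θ)).1)
    exact ((hinv.smul (hfz.comp z (differentiable_update_left j _ z))).const_smul _)
      |>.differentiableWithinAt
  · rw [hr2] at hz
    obtain ⟨-, hfM, hden⟩ := hnear z hz _ (circleMap_mem_sphere 0 hR θ)
    simp only [G, norm_smul, norm_mul, norm_circleMap_zero, abs_of_nonneg hR, norm_I, mul_one,
      norm_inv]
    gcongr

-- Any radius `R > ‖z‖` would do, by `sliceCauchyIntegral_eq_of_le`.
noncomputable def hartogsExtension (f : (ι → ℂ) → V) (j : ι) (z : ι → ℂ) : V :=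
  sliceCauchyIntegral f j (‖z‖ + 1) z

theorem differentiable_hartogsExtension (hf : DifferentiableOn ℂ f U) (hU : IsOpen U)
    (hUj : ∀ (z : ι → ℂ) (w : ℂ), ‖z‖ < ‖w‖ → update z j w ∈ U) :
    Differentiable ℂ (hartogsExtension f j) := by
  intro z₀
  have hloc : hartogsExtension f j =ᶠ[𝓝 z₀] sliceCauchyIntegral f j (‖z₀‖ + 2) := by
    filter_upwards [ball_mem_nhds z₀ one_pos] with z hz
    have hzz₀ : ‖z‖ < ‖z₀‖ + 1 := by
      rw [mem_ball, dist_eq_norm] at hz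
      linarith [norm_le_insert' z z₀]
    exact (sliceCauchyIntegral_eq_of_le hf hU ((norm_le_pi_norm z j).trans_lt (lt_add_one _))
      (by linarith) fun w hw _ => hUj z w (by linarith)).symm
  refine (differentiableAt_sliceCauchyIntegral hf hU ?_ fun w hw => hUj z₀ w ?_)
    |>.congr_of_eventuallyEq hloc
  · linarith [norm_le_pi_norm z₀ j]
  · rw [mem_sphere_zero_iff_norm.1 hw]
    linarith

theorem hartogsExtension_eq [CompleteSpace V] (hf : DifferentiableOn ℂ f U) (hU : IsOpen U)
    {z : ι → ℂ} (hz : ∀ w, update z j w ∈ U) : hartogsExtension f j z = f z :=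
  sliceCauchyIntegral_eq_self hf hU ((norm_le_pi_norm z j).trans_lt (lt_add_one _)) fun w _ => hz w

end SliceCauchyIntegral

theorem isOpen_Dn1 (n : ℕ) : IsOpen (Dn1 n) :=
  isOpen_lt (by fun_prop) (by fun_prop)

theorem mem_Dn1_of_norm_lt {n : ℕ} {z : Fin (n + 1) → ℂ} (i : Fin n) (h : ‖z 0‖ < ‖z i.succ‖) :
    z ∈ Dn1 n :=
  (pow_lt_pow_left₀ h (norm_nonneg _) two_ne_zero).trans_le <|
    Finset.single_le_sum (f := fun i => ‖z i.succ‖ ^ 2) (fun _ _ => by positivity)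
      (Finset.mem_univ i)

theorem cons_mem_Dn1_iff {n : ℕ} (a : ℂ) (u : Fin n → ℂ) :
    (Fin.cons a u : Fin (n + 1) → ℂ) ∈ Dn1 n ↔ ‖a‖ ^ 2 < ∑ i, ‖u i‖ ^ 2 := by
  simp [Dn1]

theorem isPreconnected_Dn1 (n : ℕ) : IsPreconnected (Dn1 (n + 1)) := by
  set S : Set (Fin (n + 2) → ℂ) := (fun u => Fin.cons 0 u) '' {0}ᶜ
  have hS : IsPreconnected S := by
    have hcons : Continuous fun u : Fin (n + 1) → ℂ => (Fin.cons 0 u : Fin (n + 2) → ℂ) := by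
      fun_prop
    refine (isPathConnected_compl_singleton_of_one_lt_rank ?_ 0).isConnected.isPreconnected.image
      _ hcons.continuousOn
    simp only [rank_pi, Complex.rank_real_complex, Cardinal.sum_const, Cardinal.mk_fintype,
      Fintype.card_fin, Nat.cast_add, Nat.cast_one, Cardinal.lift_id]
    norm_cast
    omega
  have hSD : S ⊆ Dn1 (n + 1) := by
    rintro _ ⟨u, hu, rfl⟩
    obtain ⟨i, hi⟩ := Function.ne_iff.1 hu
    rw [cons_mem_Dn1_iff, norm_zero, zero_pow two_ne_zero]
    exact Finset.sum_pos' (fun _ _ => by positivity)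
      ⟨i, Finset.mem_univ i, pow_pos (norm_pos_iff.2 hi) 2⟩
  refine isPreconnected_of_forall (Fin.cons 0 (Pi.single 0 1)) fun y hy => ?_
  rw [← Fin.cons_self_tail y, cons_mem_Dn1_iff] at hy
  set T := (fun t : ℂ => (Fin.cons (t * y 0) (Fin.tail y) : Fin (n + 2) → ℂ)) '' closedBall 0 1
  have hTD : T ⊆ Dn1 (n + 1) := by
    rintro _ ⟨t, ht, rfl⟩
    rw [cons_mem_Dn1_iff, norm_mul]
    refine lt_of_le_of_lt ?_ hy
    gcongr
    exact mul_le_of_le_one_left (norm_nonneg _) (mem_closedBall_zero_iff.1 ht)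
  have htail : Fin.tail y ≠ 0 := fun h => (sq_nonneg ‖y 0‖).not_gt (by simpa [h] using hy)
  refine ⟨T ∪ S, union_subset hTD hSD, Or.inr ⟨Pi.single 0 1, by simp, rfl⟩,
    Or.inl ⟨1, by simp, by simp⟩, ?_⟩
  exact IsPreconnected.union (Fin.cons 0 (Fin.tail y)) ⟨0, by simp, by simp⟩ ⟨_, htail, rfl⟩
    ((convex_closedBall 0 1).isPreconnected.image _ (by fun_prop)) hS

theorem update_one_mem_Dn1 {m : ℕ} {z : Fin (m + 3) → ℂ} {w : ℂ} (h : ‖z 0‖ < ‖w‖) :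
    update z 1 w ∈ Dn1 (m + 2) :=
  mem_Dn1_of_norm_lt 0 (by simpa using h)

theorem update_one_mem_Dn1_of_norm_lt {m : ℕ} {z : Fin (m + 3) → ℂ} (h : ‖z 0‖ < ‖z 2‖) (w : ℂ) :
    update z 1 w ∈ Dn1 (m + 2) :=
  mem_Dn1_of_norm_lt 1 (by simpa [Fin.ext_iff, Nat.mod_eq_of_lt] using h)

theorem exists_differentiable_eqOn_Dn1 {m : ℕ} {f : (Fin (m + 3) → ℂ) → (Fin (m + 3) → ℂ)}
    (hf : DifferentiableOn ℂ f (Dn1 (m + 2))) :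
    ∃ F, Differentiable ℂ F ∧ EqOn F f (Dn1 (m + 2)) := by
  have hU := isOpen_Dn1 (m + 2)
  have hF := differentiable_hartogsExtension hf hU fun z w h =>
    update_one_mem_Dn1 ((norm_le_pi_norm z 0).trans_lt h)
  set p : Fin (m + 3) → ℂ := Pi.single 2 1
  have hp : ‖p 0‖ < ‖p 2‖ := by simp [p, Fin.ext_iff, Nat.mod_eq_of_lt]
  have hW : IsOpen {z : Fin (m + 3) → ℂ | ‖z 0‖ < ‖z 2‖} := isOpen_lt (by fun_prop) (by fun_prop)
  have hev : hartogsExtension f 1 =ᶠ[𝓝 p] f := by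
    filter_upwards [hW.mem_nhds hp] with z hz
    exact hartogsExtension_eq hf hU (update_one_mem_Dn1_of_norm_lt hz)
  exact ⟨_, hF, hF.differentiableOn.eqOn_of_preconnected_of_eventuallyEq hf hU
    (isPreconnected_Dn1 _) (mem_Dn1_of_norm_lt 1 hp) hev⟩

/-- For n > 1, every biholomorphic automorphism of D^{n,1} extends to a
biholomorphic automorphism of ℂ^{n+1}. -/
theorem stmt_12 (n : ℕ) (hn : 1 < n)
    (f g : (Fin (n + 1) → ℂ) → (Fin (n + 1) → ℂ))
    (hf : DifferentiableOn ℂ f (Dn1 n)) (hg : DifferentiableOn ℂ g (Dn1 n))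
    (hfm : Set.MapsTo f (Dn1 n) (Dn1 n)) (hgm : Set.MapsTo g (Dn1 n) (Dn1 n))
    (hinv : Set.InvOn g f (Dn1 n) (Dn1 n)) :
    ∃ F G : (Fin (n + 1) → ℂ) → (Fin (n + 1) → ℂ),
      Differentiable ℂ F ∧ Differentiable ℂ G ∧ Set.EqOn F f (Dn1 n) ∧
        G ∘ F = id ∧ F ∘ G = id := by
  obtain ⟨m, rfl⟩ : ∃ m, n = m + 2 := ⟨n - 2, by omega⟩
  obtain ⟨F, hF, hFf⟩ := exists_differentiable_eqOn_Dn1 hf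
  obtain ⟨G, hG, hGg⟩ := exists_differentiable_eqOn_Dn1 hg
  have hne : (Dn1 (m + 2)).Nonempty := ⟨Pi.single 1 1, mem_Dn1_of_norm_lt 0 (by simp)⟩
  exact ⟨F, G, hF, hG, hFf,
    comp_eq_id_of_eqOn_of_leftInvOn (isOpen_Dn1 _) hne hF hG hFf hGg hfm hinv.1,
    comp_eq_id_of_eqOn_of_leftInvOn (isOpen_Dn1 _) hne hG hF hGg hFf hgm hinv.2⟩
end

section
/- Let Ω ⊂ ℂ^{n+1} be an open set invariant under the torus action (α, z) ↦ (α₀z₀, …, αₙzₙ) for α ∈ T^{n+1}, and invariant under the one-parameter group z ↦ (e^{-2πc₁t}z₀, e^{-2πc₂t}z₁, …, e^{-2πc₂t}zₙ) for all t ∈ ℝ, with c₁ ≠ 0 and c₂ = 0. Then Ω = (ℂ × D) ∪ (ℂ* × D') for some open sets D, D' ⊆ ℂⁿ with D ⊆ D'. -/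
/-!
The torus lets us rotate `z₀` by any unit complex number, and since `c₁ ≠ 0` and `c₂ = 0` the
flow rescales `z₀` by every positive real while fixing the other coordinates; together they give
the multiplication of `z₀` by all of `ℂ*`. Hence membership of `z` in `Ω` depends only on the
tail of `z` and on whether `z₀ = 0`, and openness of `Ω` shows that a point with `z₀ = 0` forces
the whole line through it into `Ω`, i.e. `D ⊆ D'`.
-/

open Filter Topology

def FirstCoordMulInvariant {𝕜 : Type*} [Mul 𝕜] [Zero 𝕜] {n : ℕ} (Ω : Set (Fin (n + 1) → 𝕜)) :
    Prop :=
  ∀ a : 𝕜, a ≠ 0 → ∀ c w, (Fin.cons c w : Fin (n + 1) → 𝕜) ∈ Ω → Fin.cons (a * c) w ∈ Ω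

section FirstCoordMulInvariant

variable {𝕜 : Type*} [NontriviallyNormedField 𝕜] {n : ℕ} {Ω : Set (Fin (n + 1) → 𝕜)}

theorem FirstCoordMulInvariant.cons_mem_iff (hΩ : FirstCoordMulInvariant Ω) {c : 𝕜} (hc : c ≠ 0)
    (w : Fin n → 𝕜) : (Fin.cons c w : Fin (n + 1) → 𝕜) ∈ Ω ↔ Fin.cons 1 w ∈ Ω := by
  refine ⟨fun h => ?_, fun h => ?_⟩
  · simpa [inv_mul_cancel₀ hc] using hΩ c⁻¹ (inv_ne_zero hc) c w h
  · simpa using hΩ c hc 1 w h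

theorem IsOpen.exists_ne_zero_cons_mem (hΩ : IsOpen Ω) {w : Fin n → 𝕜}
    (hw : (Fin.cons 0 w : Fin (n + 1) → 𝕜) ∈ Ω) : ∃ c : 𝕜, c ≠ 0 ∧ Fin.cons c w ∈ Ω := by
  have hline : ∀ᶠ c in 𝓝 (0 : 𝕜), (Fin.cons c w : Fin (n + 1) → 𝕜) ∈ Ω :=
    (continuous_id.finCons continuous_const).continuousAt.preimage_mem_nhds (hΩ.mem_nhds hw)
  obtain ⟨c, hcΩ, hc⟩ :=
    ((hline.filter_mono (nhdsWithin_le_nhds (s := {0}ᶜ))).and self_mem_nhdsWithin).exists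
  exact ⟨c, hc, hcΩ⟩

theorem FirstCoordMulInvariant.cons_mem_of_cons_zero_mem (hinv : FirstCoordMulInvariant Ω)
    (hΩ : IsOpen Ω) {w : Fin n → 𝕜} (hw : (Fin.cons 0 w : Fin (n + 1) → 𝕜) ∈ Ω) (c : 𝕜) :
    (Fin.cons c w : Fin (n + 1) → 𝕜) ∈ Ω := by
  rcases eq_or_ne c 0 with rfl | hc
  · exact hw
  obtain ⟨c', hc', hc'Ω⟩ := hΩ.exists_ne_zero_cons_mem hw
  exact (hinv.cons_mem_iff hc w).2 ((hinv.cons_mem_iff hc' w).1 hc'Ω)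

theorem FirstCoordMulInvariant.eq_union (hinv : FirstCoordMulInvariant Ω) (hΩ : IsOpen Ω) :
    Ω = {z | (Fin.cons 0 (Fin.tail z) : Fin (n + 1) → 𝕜) ∈ Ω} ∪
      {z | z 0 ≠ 0 ∧ (Fin.cons 1 (Fin.tail z) : Fin (n + 1) → 𝕜) ∈ Ω} := by
  ext z
  induction z using Fin.consCases with
  | cons c w =>
  simp only [Set.mem_union, Set.mem_ofPred_eq, Fin.cons_zero, Fin.tail_cons]
  rcases eq_or_ne c 0 with rfl | hc
  · simp
  · rw [hinv.cons_mem_iff hc]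
    exact ⟨fun h => Or.inr ⟨hc, h⟩, fun h => h.elim
      (fun h0 => hinv.cons_mem_of_cons_zero_mem hΩ h0 1) And.right⟩

end FirstCoordMulInvariant

section Complex

variable {n : ℕ} {Ω : Set (Fin (n + 1) → ℂ)}

theorem firstCoordMulInvariant_of_forall_pos_of_forall_norm_eq_one
    (hpos : ∀ r : ℝ, 0 < r → ∀ c w, (Fin.cons c w : Fin (n + 1) → ℂ) ∈ Ω →
      Fin.cons ((r : ℂ) * c) w ∈ Ω)
    (hunit : ∀ u : ℂ, ‖u‖ = 1 → ∀ c w, (Fin.cons c w : Fin (n + 1) → ℂ) ∈ Ω →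
      Fin.cons (u * c) w ∈ Ω) :
    FirstCoordMulInvariant Ω := by
  intro a ha c w h
  rw [← Complex.norm_mul_exp_arg_mul_I a, mul_assoc]
  exact hpos _ (norm_pos_iff.2 ha) _ _ (hunit _ (Complex.norm_exp_ofReal_mul_I _) _ _ h)

theorem cons_mul_mem_of_torus_invariant
    (htorus : ∀ α : Fin (n + 1) → ℂ, (∀ i, ‖α i‖ = 1) → ∀ z ∈ Ω, (fun i => α i * z i) ∈ Ω)
    {u : ℂ} (hu : ‖u‖ = 1) {c : ℂ} {w : Fin n → ℂ} (h : (Fin.cons c w : Fin (n + 1) → ℂ) ∈ Ω) :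
    (Fin.cons (u * c) w : Fin (n + 1) → ℂ) ∈ Ω := by
  convert htorus (Fin.cons u 1) (Fin.cases hu fun _ => norm_one) _ h using 1
  funext i
  cases i using Fin.cases <;> simp

theorem cons_mul_mem_of_flow_invariant {c₁ c₂ : ℝ} (hc₁ : c₁ ≠ 0) (hc₂ : c₂ = 0)
    (hflow : ∀ t : ℝ, ∀ z ∈ Ω,
      (fun i : Fin (n + 1) =>
        if i = 0 then (Real.exp (-(2 * Real.pi * c₁ * t)) : ℂ) * z i
        else (Real.exp (-(2 * Real.pi * c₂ * t)) : ℂ) * z i) ∈ Ω)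
    {r : ℝ} (hr : 0 < r) {c : ℂ} {w : Fin n → ℂ} (h : (Fin.cons c w : Fin (n + 1) → ℂ) ∈ Ω) :
    (Fin.cons ((r : ℂ) * c) w : Fin (n + 1) → ℂ) ∈ Ω := by
  have hexp : Real.exp (-(2 * Real.pi * c₁ * (-Real.log r / (2 * Real.pi * c₁)))) = r := by
    rw [show -(2 * Real.pi * c₁ * (-Real.log r / (2 * Real.pi * c₁))) = Real.log r by
      field_simp, Real.exp_log hr]
  convert hflow (-Real.log r / (2 * Real.pi * c₁)) _ h using 1
  funext i
  cases i using Fin.cases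
  · simp only [Fin.cons_zero, hexp, ↓reduceIte]
  · simp [hc₂]

end Complex

/-- An open set Ω ⊆ ℂ^{n+1} invariant under the torus T^{n+1} and under the
one-parameter group z ↦ (e^{-2πc₁t}z₀, e^{-2πc₂t}z₁, …, e^{-2πc₂t}zₙ) with
c₁ ≠ 0, c₂ = 0, is of the form (ℂ × D) ∪ (ℂ* × D') with D, D' open and D ⊆ D'. -/
theorem stmt_18 (n : ℕ) (Ω : Set (Fin (n + 1) → ℂ)) (hΩ : IsOpen Ω)
    (c₁ c₂ : ℝ) (hc₁ : c₁ ≠ 0) (hc₂ : c₂ = 0)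
    (htorus : ∀ α : Fin (n + 1) → ℂ, (∀ i, ‖α i‖ = 1) →
      ∀ z ∈ Ω, (fun i => α i * z i) ∈ Ω)
    (hflow : ∀ t : ℝ, ∀ z ∈ Ω,
      (fun i : Fin (n + 1) =>
        if i = 0 then (Real.exp (-(2 * Real.pi * c₁ * t)) : ℂ) * z i
        else (Real.exp (-(2 * Real.pi * c₂ * t)) : ℂ) * z i) ∈ Ω) :
    ∃ D D' : Set (Fin n → ℂ), IsOpen D ∧ IsOpen D' ∧ D ⊆ D' ∧
      Ω = {z | (fun i : Fin n => z i.succ) ∈ D} ∪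
        {z | z 0 ≠ 0 ∧ (fun i : Fin n => z i.succ) ∈ D'} := by
  have hinv : FirstCoordMulInvariant Ω :=
    firstCoordMulInvariant_of_forall_pos_of_forall_norm_eq_one
      (fun _ hr _ _ => cons_mul_mem_of_flow_invariant hc₁ hc₂ hflow hr)
      (fun _ hu _ _ => cons_mul_mem_of_torus_invariant htorus hu)
  refine ⟨{w | (Fin.cons 0 w : Fin (n + 1) → ℂ) ∈ Ω}, {w | (Fin.cons 1 w : Fin (n + 1) → ℂ) ∈ Ω},
    hΩ.preimage (continuous_const.finCons continuous_id),
    hΩ.preimage (continuous_const.finCons continuous_id),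
    fun w hw => hinv.cons_mem_of_cons_zero_mem hΩ hw 1, hinv.eq_union hΩ⟩
end
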